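/- arXiv:math/0404531 — 9 statements merged into one kernel-verified Lean document; each statement's English description precedes it below -/
import Mathlib

section
/- Let ẋ = P(x,y), ẏ = Q(x,y) be a cubic polynomial differential system with real coefficients, with degree-3 homogeneous components p₃ of P and q₃ of Q, and set C₃(x,y) = y·p₃(x,y) − x·q₃(x,y). If u,v,w ∈ ℂ with (u,v) ≠ (0,0) and the polynomial ux+vy+w divides u·P+v·Q in ℂ[x,y] (i.e. ux+vy+w = 0 is an invariant straight line of the system), then C₃(−v,u) = 0. -/
/-!
Pick a point `b` on the line `ux + vy + w = 0`; its direction is `d = (-v, u)`. The linear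
factor vanishes identically along `t ↦ b + t d`, hence so does `F = uP + vQ`. Since `F` has
degree at most three, the `t³`-coefficient of `F(b + t d)` is its cubic part
`u p₃ + v q₃` evaluated at `d`, and this is `C₃(-v, u)`.
-/

open MvPolynomial

namespace Polynomial

variable {R ι : Type*} [CommSemiring R]

theorem coeff_prod_sum_of_natDegree_le (s : Finset ι) (f : ι → R[X]) (n : ι → ℕ)
    (h : ∀ i ∈ s, (f i).natDegree ≤ n i) :
    (∏ i ∈ s, f i).coeff (∑ i ∈ s, n i) = ∏ i ∈ s, (f i).coeff (n i) := by
  classical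
  induction s using Finset.induction_on with
  | empty => simp
  | insert j s hj ih =>
    have hs : (∏ i ∈ s, f i).natDegree ≤ ∑ i ∈ s, n i :=
      (natDegree_prod_le s f).trans
        (Finset.sum_le_sum fun i hi => h i (Finset.mem_insert_of_mem hi))
    rw [Finset.prod_insert hj, Finset.sum_insert hj, Finset.prod_insert hj,
      coeff_mul_add_eq_of_natDegree_le (h j (Finset.mem_insert_self j s)) hs,
      ih fun i hi => h i (Finset.mem_insert_of_mem hi)]

theorem natDegree_linear_pow_le (a b : R) (n : ℕ) : ((C a * X + C b) ^ n).natDegree ≤ n :=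
  (natDegree_pow_le_of_le n natDegree_linear_le).trans_eq (mul_one n)

theorem coeff_linear_pow_self (a b : R) (n : ℕ) : ((C a * X + C b) ^ n).coeff n = a ^ n := by
  simpa using coeff_pow_of_natDegree_le (m := n) (natDegree_linear_le (a := a) (b := b))

end Polynomial

namespace MvPolynomial

variable {R σ : Type*} [CommSemiring R]

noncomputable def affineLine (b d : σ → R) (i : σ) : Polynomial R :=
  Polynomial.C (d i) * Polynomial.X + Polynomial.C (b i)

theorem coeff_aeval_affineLine_monomial (b d : σ → R) {k : ℕ} {m : σ →₀ ℕ}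
    (hm : m.degree ≤ k) (r : R) :
    (aeval (affineLine b d) (monomial m r)).coeff k
      = eval d (homogeneousComponent k (monomial m r)) := by
  rw [aeval_monomial, Polynomial.algebraMap_eq, Polynomial.coeff_C_mul,
    homogeneousComponent_of_mem (isHomogeneous_monomial r rfl), Finsupp.prod]
  rcases hm.lt_or_eq with hlt | rfl
  · rw [if_neg hlt.ne', map_zero, Polynomial.coeff_eq_zero_of_natDegree_lt, mul_zero]
    refine lt_of_le_of_lt ((Polynomial.natDegree_prod_le _ _).trans ?_) hlt
    exact Finset.sum_le_sum fun i _ => Polynomial.natDegree_linear_pow_le _ _ _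
  · rw [if_pos rfl, eval_monomial, Finsupp.degree_apply,
      Polynomial.coeff_prod_sum_of_natDegree_le _ (fun i => affineLine b d i ^ m i) _
        fun i _ => Polynomial.natDegree_linear_pow_le _ _ _, Finsupp.prod]
    simp only [affineLine, Polynomial.coeff_linear_pow_self]

theorem coeff_aeval_affineLine (b d : σ → R) {k : ℕ} {F : MvPolynomial σ R}
    (hF : F.totalDegree ≤ k) :
    (aeval (affineLine b d) F).coeff k = eval d (homogeneousComponent k F) := by
  conv_lhs => rw [F.as_sum]
  conv_rhs => rw [F.as_sum]
  simp only [map_sum, Polynomial.finsetSum_coeff]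
  exact Finset.sum_congr rfl fun m hm =>
    coeff_aeval_affineLine_monomial b d ((le_totalDegree hm).trans hF) _

theorem eval_homogeneousComponent_eq_zero_of_dvd (b d : σ → R) {k : ℕ}
    {L F : MvPolynomial σ R} (hL : aeval (affineLine b d) L = 0) (hLF : L ∣ F)
    (hF : F.totalDegree ≤ k) :
    eval d (homogeneousComponent k F) = 0 := by
  obtain ⟨G, rfl⟩ := hLF
  rw [← coeff_aeval_affineLine b d hF, map_mul, hL, zero_mul, Polynomial.coeff_zero]

variable {S : Type*} [CommSemiring S]

theorem totalDegree_map_le (f : R →+* S) (p : MvPolynomial σ R) :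
    (map f p).totalDegree ≤ p.totalDegree :=
  Finset.sup_mono (support_map_subset f p)

theorem homogeneousComponent_map (f : R →+* S) (n : ℕ) (p : MvPolynomial σ R) :
    homogeneousComponent n (map f p) = map f (homogeneousComponent n p) := by
  ext m
  simp only [coeff_homogeneousComponent, coeff_map]
  split_ifs <;> simp

end MvPolynomial

/-- If `ux+vy+w = 0` (with `u,v,w ∈ ℂ`, `(u,v) ≠ (0,0)`) is an
invariant straight line of the cubic system ẋ = P, ẏ = Q (i.e. `ux+vy+w`
divides `u·P+v·Q` in `ℂ[x,y]`), then `C₃(−v,u) = 0`, where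
`C₃ = y·p₃ − x·q₃` and `p₃, q₃` are the degree-3 homogeneous components. -/
theorem C3_vanishes_at_invariant_line_direction
    (P Q : MvPolynomial (Fin 2) ℝ)
    (hcubic : max P.totalDegree Q.totalDegree = 3)
    (u v w : ℂ) (huv : (u, v) ≠ (0, 0))
    (hdvd : (C u * X 0 + C v * X 1 + C w) ∣
      (C u * map (algebraMap ℝ ℂ) P + C v * map (algebraMap ℝ ℂ) Q)) :
    aeval ![-v, u]
      (X 1 * homogeneousComponent 3 P - X 0 * homogeneousComponent 3 Q) = 0 := by
  obtain ⟨b, hb⟩ : ∃ b : Fin 2 → ℂ, u * b 0 + v * b 1 + w = 0 := by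
    by_cases hu : u = 0
    · have hv : v ≠ 0 := fun hv => huv (by rw [hu, hv])
      exact ⟨![0, -w / v], by simp [mul_div_cancel₀ _ hv]⟩
    · exact ⟨![-w / u, 0], by simp [mul_div_cancel₀ _ hu]⟩
  have hline : aeval (affineLine b ![-v, u]) (C u * X 0 + C v * X 1 + C w) = 0 := by
    have hbC := congrArg Polynomial.C hb
    simp only [map_add, map_mul, Polynomial.C_0] at hbC
    simp only [affineLine, map_add, map_mul, aeval_X, aeval_C, Polynomial.algebraMap_eq,
      Matrix.cons_val_zero, Matrix.cons_val_one, map_neg]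
    linear_combination hbC
  have hdeg : (C u * map (algebraMap ℝ ℂ) P + C v * map (algebraMap ℝ ℂ) Q).totalDegree ≤ 3 := by
    rw [← hcubic]
    refine (totalDegree_add _ _).trans (max_le_max ?_ ?_) <;>
      refine (totalDegree_mul _ _).trans ?_ <;>
      rw [totalDegree_C, zero_add] <;> exact totalDegree_map_le _ _
  have key := eval_homogeneousComponent_eq_zero_of_dvd b ![-v, u] hline hdvd hdeg
  simp only [map_add, homogeneousComponent_C_mul, homogeneousComponent_map, eval_mul, eval_C,
    eval_map, ← aeval_def] at key
  simp only [map_sub, map_mul, aeval_X, Matrix.cons_val_zero, Matrix.cons_val_one]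
  linear_combination key
end

section
/- Let p₃(x,y) = p·x³+3q·x²y+3r·xy²+s·y³ and q₃(x,y) = t·x³+3u·x²y+3v·xy²+w·y³ be real homogeneous cubic polynomials. Suppose there exist two linearly independent vectors (α₁,β₁), (α₂,β₂) ∈ ℝ² and real numbers ξ₁, ξ₂ such that αᵢ·p₃ + βᵢ·q₃ = ξᵢ·(αᵢx+βᵢy)³ for i = 1,2. Then every 2×2 minor of the 3×3 matrix U = [[q, u−p, −t], [r, v−q, −u], [s, w−r, −v]] vanishes, i.e. U has rank at most 1. -/
/-- Auxiliary: if two rows `(a,b,c)` and `(a',b',c')` are both orthogonal to the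
two Veronese vectors `(αᵢ², αᵢβᵢ, βᵢ²)` of linearly independent directions,
then all 2×2 minors of the 2×3 matrix formed by the rows vanish. -/
lemma rows_parallel_aux (α₁ β₁ α₂ β₂ a b c a' b' c' : ℝ)
    (hD : α₁ * β₂ - α₂ * β₁ ≠ 0)
    (e1 : α₁ ^ 2 * a + α₁ * β₁ * b + β₁ ^ 2 * c = 0)
    (e2 : α₂ ^ 2 * a + α₂ * β₂ * b + β₂ ^ 2 * c = 0)
    (f1 : α₁ ^ 2 * a' + α₁ * β₁ * b' + β₁ ^ 2 * c' = 0)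
    (f2 : α₂ ^ 2 * a' + α₂ * β₂ * b' + β₂ ^ 2 * c' = 0) :
    a * b' - a' * b = 0 ∧ a * c' - a' * c = 0 ∧ b * c' - b' * c = 0 := by
  set D := α₁ * β₂ - α₂ * β₁ with hDdef
  set N1 := β₁ * β₂ with hN1
  set N2 := α₁ * β₂ + α₂ * β₁ with hN2
  set N3 := α₁ * α₂ with hN3
  have R1 : N3 * a - N1 * c = 0 := by
    have h : D * (N3 * a - N1 * c) = 0 := by
      rw [hDdef, hN1, hN3]; linear_combination (α₂ * β₂) * e1 - (α₁ * β₁) * e2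
    exact (mul_eq_zero.mp h).resolve_left hD
  have R2 : N2 * a + N1 * b = 0 := by
    have h : D * (N2 * a + N1 * b) = 0 := by
      rw [hDdef, hN1, hN2]; linear_combination β₂ ^ 2 * e1 - β₁ ^ 2 * e2
    exact (mul_eq_zero.mp h).resolve_left hD
  have R3 : N3 * b + N2 * c = 0 := by
    have h : D * (N3 * b + N2 * c) = 0 := by
      rw [hDdef, hN2, hN3]; linear_combination α₁ ^ 2 * e2 - α₂ ^ 2 * e1
    exact (mul_eq_zero.mp h).resolve_left hD
  have R1' : N3 * a' - N1 * c' = 0 := by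
    have h : D * (N3 * a' - N1 * c') = 0 := by
      rw [hDdef, hN1, hN3]; linear_combination (α₂ * β₂) * f1 - (α₁ * β₁) * f2
    exact (mul_eq_zero.mp h).resolve_left hD
  have R2' : N2 * a' + N1 * b' = 0 := by
    have h : D * (N2 * a' + N1 * b') = 0 := by
      rw [hDdef, hN1, hN2]; linear_combination β₂ ^ 2 * f1 - β₁ ^ 2 * f2
    exact (mul_eq_zero.mp h).resolve_left hD
  have R3' : N3 * b' + N2 * c' = 0 := by
    have h : D * (N3 * b' + N2 * c') = 0 := by
      rw [hDdef, hN2, hN3]; linear_combination α₁ ^ 2 * f2 - α₂ ^ 2 * f1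
    exact (mul_eq_zero.mp h).resolve_left hD
  have h1 : N1 * (a * b' - a' * b) = 0 := by linear_combination a * R2' - a' * R2
  have h2 : N2 * (a * b' - a' * b) = 0 := by linear_combination b' * R2 - b * R2'
  have h12 : N3 * (a * b' - a' * b) + N1 * (b * c' - b' * c) = 0 := by
    linear_combination b' * R1 - b * R1'
  have h3 : N3 * (b * c' - b' * c) = 0 := by linear_combination c' * R3 - c * R3'
  have h4 : N2 * (b * c' - b' * c) = 0 := by linear_combination b * R3' - b' * R3
  have h5 : N1 * (a * c' - a' * c) = 0 := by linear_combination a' * R1 - a * R1'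
  have h6 : N3 * (a * c' - a' * c) = 0 := by linear_combination c' * R1 - c * R1'
  have hmix2 : N2 * (a * c' - a' * c) + N1 * (b * c' - b' * c) = 0 := by
    linear_combination c' * R2 - c * R2'
  have hid : D ^ 2 = N2 ^ 2 - 4 * N1 * N3 := by
    rw [hDdef, hN1, hN2, hN3]; ring
  have hD2 : 0 < D ^ 2 := by positivity
  have hNpos : 0 < N1 ^ 2 + N2 ^ 2 + N3 ^ 2 := by
    nlinarith [sq_nonneg (N1 + N3), sq_nonneg (N1 - N3)]
  have hNne : N1 ^ 2 + N2 ^ 2 + N3 ^ 2 ≠ 0 := ne_of_gt hNpos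
  refine ⟨?_, ?_, ?_⟩
  · have h : (a * b' - a' * b) * (N1 ^ 2 + N2 ^ 2 + N3 ^ 2) = 0 := by
      linear_combination N1 * h1 + N2 * h2 + N3 * h12 - N1 * h3
    exact (mul_eq_zero.mp h).resolve_right hNne
  · have h : (a * c' - a' * c) * (N1 ^ 2 + N2 ^ 2 + N3 ^ 2) = 0 := by
      linear_combination N1 * h5 + N3 * h6 + N2 * hmix2 - N1 * h4
    exact (mul_eq_zero.mp h).resolve_right hNne
  · have h : (b * c' - b' * c) * (N1 ^ 2 + N2 ^ 2 + N3 ^ 2) = 0 := by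
      linear_combination N2 * h4 + N3 * h3 + N1 * h12 - N3 * h1
    exact (mul_eq_zero.mp h).resolve_right hNne

/-- If `p₃ = p·x³+3q·x²y+3r·xy²+s·y³` and
`q₃ = t·x³+3u·x²y+3v·xy²+w·y³` satisfy `αᵢ·p₃+βᵢ·q₃ = ξᵢ·(αᵢx+βᵢy)³` for two
linearly independent directions `(α₁,β₁), (α₂,β₂)`, then every 2×2 minor of
the matrix `U = [[q, u−p, −t], [r, v−q, −u], [s, w−r, −v]]` vanishes. -/
theorem minors_vanish_of_two_triples
    (p q r s t u v w : ℝ) (α₁ β₁ α₂ β₂ ξ₁ ξ₂ : ℝ)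
    (hind : α₁ * β₂ - α₂ * β₁ ≠ 0)
    (h₁ : ∀ x y : ℝ,
      α₁ * (p * x ^ 3 + 3 * q * x ^ 2 * y + 3 * r * x * y ^ 2 + s * y ^ 3) +
        β₁ * (t * x ^ 3 + 3 * u * x ^ 2 * y + 3 * v * x * y ^ 2 + w * y ^ 3) =
          ξ₁ * (α₁ * x + β₁ * y) ^ 3)
    (h₂ : ∀ x y : ℝ,
      α₂ * (p * x ^ 3 + 3 * q * x ^ 2 * y + 3 * r * x * y ^ 2 + s * y ^ 3) +
        β₂ * (t * x ^ 3 + 3 * u * x ^ 2 * y + 3 * v * x * y ^ 2 + w * y ^ 3) =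
          ξ₂ * (α₂ * x + β₂ * y) ^ 3) :
    q * (v - q) - (u - p) * r = 0 ∧
    q * (-u) - (-t) * r = 0 ∧
    (u - p) * (-u) - (-t) * (v - q) = 0 ∧
    q * (w - r) - (u - p) * s = 0 ∧
    q * (-v) - (-t) * s = 0 ∧
    (u - p) * (-v) - (-t) * (w - r) = 0 ∧
    r * (w - r) - (v - q) * s = 0 ∧
    r * (-v) - (-u) * s = 0 ∧
    (v - q) * (-v) - (-u) * (w - r) = 0 := by
  -- Row equations for direction 1
  have E11 : α₁ ^ 2 * q + α₁ * β₁ * (u - p) + β₁ ^ 2 * (-t) = 0 := by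
    linear_combination (α₁ / 6) * (h₁ 1 1) - (α₁ / 6) * (h₁ 1 (-1)) -
      (α₁ / 3) * (h₁ 0 1) - β₁ * (h₁ 1 0)
  have E12 : α₁ ^ 2 * r + α₁ * β₁ * (v - q) + β₁ ^ 2 * (-u) = 0 := by
    linear_combination (α₁ / 6) * (h₁ 1 1) + (α₁ / 6) * (h₁ 1 (-1)) -
      (α₁ / 3) * (h₁ 1 0) - (β₁ / 6) * (h₁ 1 1) + (β₁ / 6) * (h₁ 1 (-1)) +
      (β₁ / 3) * (h₁ 0 1)
  have E13 : α₁ ^ 2 * s + α₁ * β₁ * (w - r) + β₁ ^ 2 * (-v) = 0 := by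
    linear_combination α₁ * (h₁ 0 1) - (β₁ / 6) * (h₁ 1 1) -
      (β₁ / 6) * (h₁ 1 (-1)) + (β₁ / 3) * (h₁ 1 0)
  -- Row equations for direction 2
  have E21 : α₂ ^ 2 * q + α₂ * β₂ * (u - p) + β₂ ^ 2 * (-t) = 0 := by
    linear_combination (α₂ / 6) * (h₂ 1 1) - (α₂ / 6) * (h₂ 1 (-1)) -
      (α₂ / 3) * (h₂ 0 1) - β₂ * (h₂ 1 0)
  have E22 : α₂ ^ 2 * r + α₂ * β₂ * (v - q) + β₂ ^ 2 * (-u) = 0 := by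
    linear_combination (α₂ / 6) * (h₂ 1 1) + (α₂ / 6) * (h₂ 1 (-1)) -
      (α₂ / 3) * (h₂ 1 0) - (β₂ / 6) * (h₂ 1 1) + (β₂ / 6) * (h₂ 1 (-1)) +
      (β₂ / 3) * (h₂ 0 1)
  have E23 : α₂ ^ 2 * s + α₂ * β₂ * (w - r) + β₂ ^ 2 * (-v) = 0 := by
    linear_combination α₂ * (h₂ 0 1) - (β₂ / 6) * (h₂ 1 1) -
      (β₂ / 6) * (h₂ 1 (-1)) + (β₂ / 3) * (h₂ 1 0)
  obtain ⟨m1, m2, m3⟩ := rows_parallel_aux α₁ β₁ α₂ β₂ q (u - p) (-t) r (v - q) (-u)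
    hind E11 E21 E12 E22
  obtain ⟨m4, m5, m6⟩ := rows_parallel_aux α₁ β₁ α₂ β₂ q (u - p) (-t) s (w - r) (-v)
    hind E11 E21 E13 E23
  obtain ⟨m7, m8, m9⟩ := rows_parallel_aux α₁ β₁ α₂ β₂ r (v - q) (-u) s (w - r) (-v)
    hind E12 E22 E13 E23
  exact ⟨by linarith, by linarith, by linarith, by linarith, by linarith,
    by linarith, by linarith, by linarith, by linarith⟩
end

section
/- Let ẋ = P(x,y), ẏ = Q(x,y) be a polynomial differential system with P,Q ∈ ℝ[x,y] of degree at most 3, and let p₃, q₃ be the degree-3 homogeneous components of P and Q. Suppose α, β, γ₁, γ₂, γ₃ ∈ ℂ with (α,β) ≠ (0,0) and γ₁, γ₂, γ₃ pairwise distinct are such that each of the three parallel lines αx+βy+γᵢ = 0 (i = 1,2,3) is an invariant straight line of the system, i.e. αx+βy+γᵢ divides α·P+β·Q in ℂ[x,y]. Then there exists ξ ∈ ℂ such that α·p₃ + β·q₃ = ξ·(αx+βy)³. -/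
open MvPolynomial

section Aux

variable {σ : Type*}

private lemma myTotalDegree_map_le {R S : Type*} [CommSemiring R] [CommSemiring S]
    (f : R →+* S) (p : MvPolynomial σ R) :
    (map f p).totalDegree ≤ p.totalDegree :=
  Finset.sup_mono (support_map_subset f p)

private lemma myHomogeneousComponent_map {R S : Type*} [CommSemiring R] [CommSemiring S]
    (f : R →+* S) (p : MvPolynomial σ R) (n : ℕ) :
    homogeneousComponent n (map f p) = map f (homogeneousComponent n p) := by
  ext d
  simp only [coeff_homogeneousComponent, coeff_map]
  split <;> simp

private lemma myHC_mul {R : Type*} [CommRing R] {k : ℕ} {H : MvPolynomial σ R}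
    (hH : H.IsHomogeneous k) (S : MvPolynomial σ R) (m : ℕ) :
    homogeneousComponent (k + m) (H * S) = H * homogeneousComponent m S := by
  have hS : H * S = ∑ j ∈ Finset.range (S.totalDegree + 1),
      H * homogeneousComponent j S := by
    rw [← Finset.mul_sum, sum_homogeneousComponent]
  rw [hS, map_sum]
  have hterm : ∀ j ∈ Finset.range (S.totalDegree + 1),
      homogeneousComponent (k + m) (H * homogeneousComponent j S)
        = if j = m then H * homogeneousComponent j S else 0 := by
    intro j _
    have hmem : H * homogeneousComponent j S ∈ homogeneousSubmodule σ R (k + j) :=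
      (mem_homogeneousSubmodule _ _).2 (hH.mul (homogeneousComponent_isHomogeneous j S))
    rw [homogeneousComponent_of_mem hmem]
    simp only [add_right_inj]
    simp [eq_comm]
  rw [Finset.sum_congr rfl hterm, Finset.sum_ite_eq' (Finset.range (S.totalDegree + 1)) m]
  split_ifs with h
  · rfl
  · have : S.totalDegree < m := by
      by_contra hc
      exact h (Finset.mem_range.2 (by omega))
    rw [homogeneousComponent_eq_zero _ _ this, mul_zero]

private lemma myHC_top_ne_zero {R : Type*} [CommRing R] (S : MvPolynomial σ R)
    (hS : S ≠ 0) : homogeneousComponent S.totalDegree S ≠ 0 := by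
  have hsupp : S.support.Nonempty := support_nonempty.2 hS
  obtain ⟨d, hd, hsum⟩ := Finset.exists_mem_eq_sup S.support hsupp
    (fun s => s.sum fun _ e => e)
  intro hzero
  have : coeff d (homogeneousComponent S.totalDegree S) = 0 := by rw [hzero]; simp
  rw [coeff_homogeneousComponent] at this
  rw [if_pos] at this
  · exact (mem_support_iff.1 hd) this
  · exact hsum.symm

end Aux

/-- If a system ẋ = P, ẏ = Q with `P, Q ∈ ℝ[x,y]` of degree at
most 3 has three parallel invariant straight lines `αx+βy+γᵢ = 0`
(`γ₁, γ₂, γ₃` pairwise distinct, `(α,β) ≠ (0,0)`), then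
`α·p₃+β·q₃ = ξ·(αx+βy)³` for some `ξ ∈ ℂ`, where `p₃, q₃` are the degree-3
homogeneous components of `P, Q`. -/
theorem cubic_part_of_three_parallel_invariant_lines
    (P Q : MvPolynomial (Fin 2) ℝ)
    (hP : P.totalDegree ≤ 3) (hQ : Q.totalDegree ≤ 3)
    (α β γ₁ γ₂ γ₃ : ℂ) (hαβ : (α, β) ≠ (0, 0))
    (h12 : γ₁ ≠ γ₂) (h13 : γ₁ ≠ γ₃) (h23 : γ₂ ≠ γ₃)
    (hdvd : ∀ γ ∈ ({γ₁, γ₂, γ₃} : Set ℂ),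
      (C α * X 0 + C β * X 1 + C γ) ∣
        (C α * map (algebraMap ℝ ℂ) P + C β * map (algebraMap ℝ ℂ) Q)) :
    ∃ ξ : ℂ,
      C α * map (algebraMap ℝ ℂ) (homogeneousComponent 3 P) +
          C β * map (algebraMap ℝ ℂ) (homogeneousComponent 3 Q) =
        C ξ * (C α * X 0 + C β * X 1) ^ 3 := by
  set L : MvPolynomial (Fin 2) ℂ := C α * X 0 + C β * X 1 with hLdef
  set R : MvPolynomial (Fin 2) ℂ :=
    C α * map (algebraMap ℝ ℂ) P + C β * map (algebraMap ℝ ℂ) Q with hRdef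
  -- The LHS of the goal is the degree-3 homogeneous component of R.
  have hLHS : C α * map (algebraMap ℝ ℂ) (homogeneousComponent 3 P) +
      C β * map (algebraMap ℝ ℂ) (homogeneousComponent 3 Q)
        = homogeneousComponent 3 R := by
    rw [hRdef, map_add, homogeneousComponent_C_mul, homogeneousComponent_C_mul,
      myHomogeneousComponent_map, myHomogeneousComponent_map]
  rw [hLHS]
  -- degree bound on R
  have hdegL : L.totalDegree ≤ 1 := by
    refine (totalDegree_add _ _).trans (max_le ?_ ?_) <;>
      refine (totalDegree_mul _ _).trans ?_ <;>
        simp [totalDegree_C, totalDegree_X]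
  have hdegR : R.totalDegree ≤ 3 := by
    refine (totalDegree_add _ _).trans (max_le ?_ ?_) <;>
      refine (totalDegree_mul _ _).trans ?_
    · simpa using (myTotalDegree_map_le (algebraMap ℝ ℂ) P).trans hP
    · simpa using (myTotalDegree_map_le (algebraMap ℝ ℂ) Q).trans hQ
  -- trivial case R = 0
  by_cases hR0 : R = 0
  · exact ⟨0, by rw [hR0]; simp⟩
  -- coprimality of the three lines
  have hcop : ∀ γ δ : ℂ, γ ≠ δ → IsCoprime (L + C γ) (L + C δ) := by
    intro γ δ h
    refine ⟨C (γ - δ)⁻¹, -C (γ - δ)⁻¹, ?_⟩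
    have : C (γ - δ)⁻¹ * (L + C γ) + -C (γ - δ)⁻¹ * (L + C δ)
        = C (γ - δ)⁻¹ * C (γ - δ) := by
      rw [map_sub]; ring
    rw [this, ← C_mul, inv_mul_cancel₀ (sub_ne_zero.2 h), C_1]
  have hd1 := hdvd γ₁ (by simp)
  have hd2 := hdvd γ₂ (by simp)
  have hd3 := hdvd γ₃ (by simp)
  have hF : (L + C γ₁) * (L + C γ₂) * (L + C γ₃) ∣ R :=
    (((hcop γ₁ γ₃ h13).mul_left (hcop γ₂ γ₃ h23)).mul_dvd
      ((hcop γ₁ γ₂ h12).mul_dvd hd1 hd2) hd3)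
  obtain ⟨S, hRS⟩ := hF
  -- expand the product
  set F₂ : MvPolynomial (Fin 2) ℂ :=
    C (γ₁ + γ₂ + γ₃) * L ^ 2 + C (γ₁ * γ₂ + γ₁ * γ₃ + γ₂ * γ₃) * L + C (γ₁ * γ₂ * γ₃)
    with hF₂def
  have hexp : (L + C γ₁) * (L + C γ₂) * (L + C γ₃) = L ^ 3 + F₂ := by
    rw [hF₂def]
    simp only [map_add, map_mul]
    ring
  rw [hexp] at hRS
  have hdegF₂ : F₂.totalDegree ≤ 2 := by
    rw [hF₂def]
    refine (totalDegree_add _ _).trans (max_le ((totalDegree_add _ _).trans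
      (max_le ?_ ?_)) ?_)
    · refine (totalDegree_mul _ _).trans ?_
      rw [totalDegree_C, zero_add]
      exact (totalDegree_pow L 2).trans (by omega)
    · refine (totalDegree_mul _ _).trans ?_
      rw [totalDegree_C, zero_add]
      omega
    · rw [totalDegree_C]; omega
  -- L is homogeneous of degree 1 and nonzero
  have hLhom : L.IsHomogeneous 1 := by
    rw [hLdef]
    exact ((isHomogeneous_X ℂ (0 : Fin 2)).C_mul α).add
      ((isHomogeneous_X ℂ (1 : Fin 2)).C_mul β)
  have hL3hom : (L ^ 3).IsHomogeneous 3 := by simpa using hLhom.pow 3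
  have hLne : L ≠ 0 := by
    intro h
    have hα : α = 0 := by
      have := congrArg (coeff (Finsupp.single (0 : Fin 2) 1)) h
      simpa [hLdef, coeff_add, coeff_C_mul, coeff_X', Finsupp.single_eq_single_iff] using this
    have hβ : β = 0 := by
      have := congrArg (coeff (Finsupp.single (1 : Fin 2) 1)) h
      simpa [hLdef, coeff_add, coeff_C_mul, coeff_X', Finsupp.single_eq_single_iff] using this
    exact hαβ (by simp [hα, hβ])
  have hL3ne : L ^ 3 ≠ 0 := pow_ne_zero _ hLne
  have hSne : S ≠ 0 := by
    intro h; rw [h, mul_zero] at hRS; exact hR0 hRS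
  -- S is constant
  have hSdeg : S.totalDegree = 0 := by
    by_contra hm
    set m := S.totalDegree with hmdef
    have hm1 : 1 ≤ m := Nat.one_le_iff_ne_zero.2 hm
    have h1 : homogeneousComponent (3 + m) R = 0 :=
      homogeneousComponent_eq_zero _ _ (by omega)
    have h2 : homogeneousComponent (3 + m) R
        = L ^ 3 * homogeneousComponent m S := by
      rw [hRS, add_mul, map_add, myHC_mul hL3hom S m]
      have : homogeneousComponent (3 + m) (F₂ * S) = 0 := by
        refine homogeneousComponent_eq_zero _ _ ?_
        calc (F₂ * S).totalDegree ≤ F₂.totalDegree + S.totalDegree :=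
              totalDegree_mul _ _
          _ ≤ 2 + m := by omega
          _ < 3 + m := by omega
      rw [this, add_zero]
    have h3 : homogeneousComponent m S = 0 := by
      have := h1 ▸ h2
      rcases mul_eq_zero.1 this.symm with h | h
      · exact absurd h hL3ne
      · exact h
    exact myHC_top_ne_zero S hSne (hmdef ▸ h3)
  obtain ⟨ξ, hSC⟩ : ∃ ξ, S = C ξ := by
    refine ⟨coeff 0 S, ?_⟩
    have h := sum_homogeneousComponent S
    rw [hSdeg] at h
    simp only [zero_add, Finset.sum_range_one] at h
    rw [← homogeneousComponent_zero]
    exact h.symm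
  refine ⟨ξ, ?_⟩
  rw [hRS, hSC, add_mul, map_add]
  have hA : homogeneousComponent 3 (L ^ 3 * C ξ)
      = C ξ * L ^ 3 := by
    have := myHC_mul hL3hom (C ξ) 0
    rw [add_zero] at this
    rw [this, homogeneousComponent_zero]
    simp [mul_comm]
  have hB : homogeneousComponent 3 (F₂ * C ξ) = 0 := by
    refine homogeneousComponent_eq_zero _ _ ?_
    calc (F₂ * C ξ).totalDegree ≤ F₂.totalDegree + 0 := by
          simpa [totalDegree_C] using totalDegree_mul F₂ (C ξ)
      _ < 3 := by omega
  rw [hA, hB, add_zero]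
end

section
/- Let ẋ = P(x,y), ẏ = Q(x,y) be a polynomial differential system with P,Q ∈ ℝ[x,y] of degree at most 3, and let p₃, q₃ be the degree-3 homogeneous components of P and Q. Suppose α, β, γ₁, γ₂ ∈ ℂ with (α,β) ≠ (0,0) and γ₁ ≠ γ₂ are such that each of the two parallel lines αx+βy+γᵢ = 0 (i = 1,2) is an invariant straight line of the system, i.e. αx+βy+γᵢ divides α·P+β·Q in ℂ[x,y]. Then there exist μ, η ∈ ℂ such that α·p₃ + β·q₃ = (αx+βy)²·(μx+ηy). -/
open MvPolynomial Finset


variable {σ : Type*} {R : Type*} [CommSemiring R]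

lemma sum_hc_of_le (p : MvPolynomial σ R) {b : ℕ} (h : p.totalDegree ≤ b) :
    ∑ i ∈ Finset.range (b + 1), homogeneousComponent i p = p := by
  have key : ∑ i ∈ Finset.range (p.totalDegree + 1), homogeneousComponent i p
      = ∑ i ∈ Finset.range (b + 1), homogeneousComponent i p := by
    apply Finset.sum_subset (Finset.range_subset_range.2 (by omega))
    intro i hi hi'
    simp only [Finset.mem_range] at hi hi'
    exact homogeneousComponent_eq_zero i p (by omega)
  rw [← key, sum_homogeneousComponent]

lemma hc_mul_homog {p q : MvPolynomial σ R} {a b : ℕ}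
    (hp : p.IsHomogeneous a) (hq : q.totalDegree ≤ b) :
    homogeneousComponent (a + b) (p * q) = p * homogeneousComponent b q := by
  conv_lhs => rw [← sum_hc_of_le q hq, Finset.mul_sum, map_sum]
  rw [Finset.sum_eq_single b]
  · rw [homogeneousComponent_of_mem
      ((mem_homogeneousSubmodule _ _).2 (hp.mul (homogeneousComponent_isHomogeneous b q)))]
    simp
  · intro i _ hib
    rw [homogeneousComponent_of_mem
      ((mem_homogeneousSubmodule _ _).2 (hp.mul (homogeneousComponent_isHomogeneous i q)))]
    rw [if_neg (by omega)]
  · simp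

lemma leading_hc_ne_zero {p : MvPolynomial σ R} (hp : p ≠ 0) :
    homogeneousComponent p.totalDegree p ≠ 0 := by
  obtain ⟨d, hd, hdeg⟩ :=
    Finset.exists_mem_eq_sup p.support (support_nonempty.2 hp) fun m => m.sum fun _ e => e
  intro h
  have hc := coeff_homogeneousComponent (φ := p) p.totalDegree d
  rw [h] at hc
  have hdd : d.degree = p.totalDegree := by
    rw [Finsupp.degree, totalDegree, hdeg]; rfl
  rw [if_pos hdd] at hc
  exact (mem_support_iff.1 hd) hc.symm

lemma map_hc (f : ℝ →+* ℂ) (n : ℕ) (p : MvPolynomial σ ℝ) :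
    homogeneousComponent n (map f p) = map f (homogeneousComponent n p) := by
  ext d
  rw [coeff_homogeneousComponent, coeff_map, coeff_map, coeff_homogeneousComponent]
  split_ifs <;> simp

lemma td_map_le (f : ℝ →+* ℂ) (p : MvPolynomial σ ℝ) :
    (map f p).totalDegree ≤ p.totalDegree := by
  rw [totalDegree, totalDegree]
  exact Finset.sup_mono (support_map_subset _ _)

lemma homog_one_eq (p : MvPolynomial (Fin 2) ℂ) (hp : p.IsHomogeneous 1) :
    p = C (coeff (Finsupp.single 0 1) p) * X 0 + C (coeff (Finsupp.single 1 1) p) * X 1 := by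
  have hne : (Finsupp.single (0 : Fin 2) 1) ≠ Finsupp.single 1 1 := by
    intro h
    have := DFunLike.congr_fun h 0
    simp at this
  ext d
  rw [coeff_add, coeff_C_mul, coeff_C_mul, coeff_X', coeff_X']
  by_cases h0 : d = Finsupp.single 0 1
  · subst h0
    rw [if_pos rfl, if_neg (fun h => hne h.symm)]
    simp
  by_cases h1 : d = Finsupp.single 1 1
  · subst h1
    rw [if_neg (fun h => hne h), if_pos rfl]
    simp
  · rw [if_neg (by exact fun h => h0 h.symm), if_neg (by exact fun h => h1 h.symm)]
    simp only [mul_zero, add_zero]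
    apply hp.coeff_eq_zero
    intro hdeg
    have hsum : d 0 + d 1 = 1 := by
      rw [Finsupp.degree] at hdeg
      have huniv : ∑ i : Fin 2, d i = 1 := by
        rw [← hdeg]
        exact (Finset.sum_subset (Finset.subset_univ _)
          (fun i _ hi => Finsupp.notMem_support_iff.1 hi)).symm
      rwa [Fin.sum_univ_two] at huniv
    rcases (by omega : d 0 = 1 ∧ d 1 = 0 ∨ d 0 = 0 ∧ d 1 = 1) with ⟨ha, hb⟩ | ⟨ha, hb⟩
    · exact h0 (by ext i; fin_cases i <;> simp [ha, hb])
    · exact h1 (by ext i; fin_cases i <;> simp [ha, hb])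

/-- If a system ẋ = P, ẏ = Q with `P, Q ∈ ℝ[x,y]` of degree at
most 3 has two distinct parallel invariant straight lines `αx+βy+γᵢ = 0`
(`γ₁ ≠ γ₂`, `(α,β) ≠ (0,0)`), then `α·p₃+β·q₃ = (αx+βy)²·(μx+ηy)` for some
`μ, η ∈ ℂ`, where `p₃, q₃` are the degree-3 homogeneous components. -/
theorem cubic_part_of_two_parallel_invariant_lines
    (P Q : MvPolynomial (Fin 2) ℝ)
    (hP : P.totalDegree ≤ 3) (hQ : Q.totalDegree ≤ 3)
    (α β γ₁ γ₂ : ℂ) (hαβ : (α, β) ≠ (0, 0)) (h12 : γ₁ ≠ γ₂)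
    (hdvd : ∀ γ ∈ ({γ₁, γ₂} : Set ℂ),
      (C α * X 0 + C β * X 1 + C γ) ∣
        (C α * map (algebraMap ℝ ℂ) P + C β * map (algebraMap ℝ ℂ) Q)) :
    ∃ μ η : ℂ,
      C α * map (algebraMap ℝ ℂ) (homogeneousComponent 3 P) +
          C β * map (algebraMap ℝ ℂ) (homogeneousComponent 3 Q) =
        (C α * X 0 + C β * X 1) ^ 2 * (C μ * X 0 + C η * X 1) := by
  set f := algebraMap ℝ ℂ with hf
  set R : MvPolynomial (Fin 2) ℂ := C α * map f P + C β * map f Q with hR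
  set ℓ : MvPolynomial (Fin 2) ℂ := C α * X 0 + C β * X 1 with hℓ
  have hℓhom : ℓ.IsHomogeneous 1 := (isHomogeneous_C_mul_X α 0).add (isHomogeneous_C_mul_X β 1)
  have hℓ2hom : (ℓ ^ 2).IsHomogeneous 2 := by simpa using hℓhom.pow 2
  have hkey : C α * map f (homogeneousComponent 3 P) + C β * map f (homogeneousComponent 3 Q)
      = homogeneousComponent 3 R := by
    rw [hR, map_add (homogeneousComponent 3), homogeneousComponent_C_mul,
      homogeneousComponent_C_mul, map_hc, map_hc]
  have hdegR : R.totalDegree ≤ 3 := by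
    apply le_trans (totalDegree_add _ _)
    apply max_le
    · exact le_trans (totalDegree_mul _ _)
        (by rw [totalDegree_C, zero_add]; exact le_trans (td_map_le _ _) hP)
    · exact le_trans (totalDegree_mul _ _)
        (by rw [totalDegree_C, zero_add]; exact le_trans (td_map_le _ _) hQ)
  have h1 : (ℓ + C γ₁) ∣ R := hdvd γ₁ (by simp)
  have h2 : (ℓ + C γ₂) ∣ R := hdvd γ₂ (by simp)
  have hd0 : γ₂ - γ₁ ≠ 0 := sub_ne_zero.2 (Ne.symm h12)
  have hcop : IsCoprime (ℓ + C γ₁) (ℓ + C γ₂) := by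
    refine ⟨-C (γ₂ - γ₁)⁻¹, C (γ₂ - γ₁)⁻¹, ?_⟩
    have h : (-C (γ₂ - γ₁)⁻¹) * (ℓ + C γ₁) + C (γ₂ - γ₁)⁻¹ * (ℓ + C γ₂)
        = C (γ₂ - γ₁)⁻¹ * (C γ₂ - C γ₁) := by ring
    rw [h, ← C_sub, ← C_mul, inv_mul_cancel₀ hd0, C_1]
  obtain ⟨S, hS⟩ := hcop.mul_dvd h1 h2
  by_cases hR0 : R = 0
  · refine ⟨0, 0, ?_⟩
    rw [hkey, hR0]
    simp
  have hS0 : S ≠ 0 := by rintro rfl; rw [mul_zero] at hS; exact hR0 hS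
  have hsne : (Finsupp.single (0 : Fin 2) 1) ≠ Finsupp.single 1 1 := by
    intro h; have := DFunLike.congr_fun h 0; simp at this
  have hℓne : ℓ ≠ 0 := by
    intro h
    apply hαβ
    have hα := congrArg (coeff (Finsupp.single 0 1)) h
    have hβ := congrArg (coeff (Finsupp.single 1 1)) h
    rw [hℓ] at hα hβ
    simp [coeff_add, coeff_C_mul, coeff_X', hsne, Ne.symm hsne] at hα hβ
    rw [Prod.ext_iff]
    exact ⟨hα, hβ⟩
  set D : MvPolynomial (Fin 2) ℂ := (C γ₁ + C γ₂) * ℓ + C γ₁ * C γ₂ with hD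
  have hfact : R = ℓ ^ 2 * S + D * S := by rw [hS]; ring
  have hDdeg : D.totalDegree ≤ 1 := by
    apply le_trans (totalDegree_add _ _)
    apply max_le
    · refine le_trans (totalDegree_mul _ _) ?_
      have hc0 : (C γ₁ + C γ₂ : MvPolynomial (Fin 2) ℂ).totalDegree = 0 := by
        rw [← C_add]; exact totalDegree_C _
      have := hℓhom.totalDegree_le
      omega
    · exact le_trans (totalDegree_mul _ _) (by simp)
  have hSdeg : S.totalDegree ≤ 1 := by
    by_contra hcon
    push_neg at hcon
    have hmul : homogeneousComponent (2 + S.totalDegree) (ℓ ^ 2 * S)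
        = ℓ ^ 2 * homogeneousComponent S.totalDegree S := hc_mul_homog hℓ2hom le_rfl
    have hD3 : homogeneousComponent (2 + S.totalDegree) (D * S) = 0 :=
      homogeneousComponent_eq_zero _ _
        (lt_of_le_of_lt (totalDegree_mul _ _) (by omega))
    have hR3 : homogeneousComponent (2 + S.totalDegree) R = 0 :=
      homogeneousComponent_eq_zero _ _ (by omega)
    rw [hfact, map_add (homogeneousComponent (2 + S.totalDegree)), hmul, hD3, add_zero] at hR3
    exact mul_ne_zero (pow_ne_zero _ hℓne) (leading_hc_ne_zero hS0) hR3
  have hc3 : homogeneousComponent 3 R = ℓ ^ 2 * homogeneousComponent 1 S := by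
    have hmul : homogeneousComponent (2 + 1) (ℓ ^ 2 * S)
        = ℓ ^ 2 * homogeneousComponent 1 S := hc_mul_homog hℓ2hom hSdeg
    have hD3 : homogeneousComponent (2 + 1) (D * S) = 0 :=
      homogeneousComponent_eq_zero _ _
        (lt_of_le_of_lt (totalDegree_mul _ _) (by omega))
    rw [show (3 : ℕ) = 2 + 1 from rfl, hfact,
      map_add (homogeneousComponent (2 + 1)), hmul, hD3, add_zero]
  refine ⟨coeff (Finsupp.single 0 1) (homogeneousComponent 1 S),
    coeff (Finsupp.single 1 1) (homogeneousComponent 1 S), ?_⟩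
  rw [hkey, hc3]
  congr 1
  exact homog_one_eq _ (homogeneousComponent_isHomogeneous 1 S)
end

section
/- Let p₃(x,y) = p·x³+3q·x²y+3r·xy²+s·y³ and q₃(x,y) = t·x³+3u·x²y+3v·xy²+w·y³ be real homogeneous cubic polynomials. Suppose there exist three pairwise non-proportional vectors (α₁,β₁), (α₂,β₂), (α₃,β₃) ∈ ℝ² with αᵢβᵢ ≠ 0 for each i, and vectors (μᵢ,ηᵢ) ∈ ℝ², such that αᵢ·p₃ + βᵢ·q₃ = (αᵢx+βᵢy)²·(μᵢx+ηᵢy) for i = 1,2,3. Then the following five quantities all vanish: K₀ = −rw+2r²−2qs+vs, K₁ = 2ps−4us−2qr+4vr, K₂ = 2q²+2v²+3ts−2pr+ur+pw−2uw−5qv, K₃ = −4tr+2tw+4uq−2uv, K₄ = 2u²+tq−2tv−pu. -/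
private lemma cubic_coeffs (a b c d k1 k2 k3 : ℝ)
    (h12 : k1 ≠ k2) (h13 : k1 ≠ k3) (h23 : k2 ≠ k3)
    (e1 : a + b * k1 + c * k1 ^ 2 + d * k1 ^ 3 = 0)
    (e2 : a + b * k2 + c * k2 ^ 2 + d * k2 ^ 3 = 0)
    (e3 : a + b * k3 + c * k3 ^ 2 + d * k3 ^ 3 = 0) :
    a = -(d * (k1 * k2 * k3)) ∧ b = d * (k1 * k2 + k1 * k3 + k2 * k3) ∧
      c = -(d * (k1 + k2 + k3)) := by
  have h12' : k1 - k2 ≠ 0 := sub_ne_zero.mpr h12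
  have h13' : k1 - k3 ≠ 0 := sub_ne_zero.mpr h13
  have h23' : k2 - k3 ≠ 0 := sub_ne_zero.mpr h23
  have g12 : b + c * (k1 + k2) + d * (k1 ^ 2 + k1 * k2 + k2 ^ 2) = 0 := by
    have h : (k1 - k2) * (b + c * (k1 + k2) + d * (k1 ^ 2 + k1 * k2 + k2 ^ 2)) = 0 := by
      linear_combination e1 - e2
    exact (mul_eq_zero.mp h).resolve_left h12'
  have g13 : b + c * (k1 + k3) + d * (k1 ^ 2 + k1 * k3 + k3 ^ 2) = 0 := by
    have h : (k1 - k3) * (b + c * (k1 + k3) + d * (k1 ^ 2 + k1 * k3 + k3 ^ 2)) = 0 := by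
      linear_combination e1 - e3
    exact (mul_eq_zero.mp h).resolve_left h13'
  have hc : c = -(d * (k1 + k2 + k3)) := by
    have h : (k2 - k3) * (c + d * (k1 + k2 + k3)) = 0 := by
      linear_combination g12 - g13
    have h' := (mul_eq_zero.mp h).resolve_left h23'
    linarith
  have hb : b = d * (k1 * k2 + k1 * k3 + k2 * k3) := by
    linear_combination g12 - (k1 + k2) * hc
  have ha : a = -(d * (k1 * k2 * k3)) := by
    linear_combination e1 - k1 * hb - k1 ^ 2 * hc
  exact ⟨ha, hb, hc⟩

/-- If `p₃ = p·x³+3q·x²y+3r·xy²+s·y³` and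
`q₃ = t·x³+3u·x²y+3v·xy²+w·y³` satisfy
`αᵢ·p₃+βᵢ·q₃ = (αᵢx+βᵢy)²·(μᵢx+ηᵢy)` for three pairwise non-proportional
directions `(αᵢ,βᵢ)` with `αᵢβᵢ ≠ 0`, then the five quantities
`K₀, K₁, K₂, K₃, K₄` all vanish. -/
theorem K_vanish_of_three_couples
    (p q r s t u v w : ℝ)
    (α₁ β₁ α₂ β₂ α₃ β₃ μ₁ η₁ μ₂ η₂ μ₃ η₃ : ℝ)
    (h1 : α₁ * β₁ ≠ 0) (h2 : α₂ * β₂ ≠ 0) (h3 : α₃ * β₃ ≠ 0)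
    (hind12 : α₁ * β₂ - α₂ * β₁ ≠ 0)
    (hind13 : α₁ * β₃ - α₃ * β₁ ≠ 0)
    (hind23 : α₂ * β₃ - α₃ * β₂ ≠ 0)
    (heq1 : ∀ x y : ℝ,
      α₁ * (p * x ^ 3 + 3 * q * x ^ 2 * y + 3 * r * x * y ^ 2 + s * y ^ 3) +
        β₁ * (t * x ^ 3 + 3 * u * x ^ 2 * y + 3 * v * x * y ^ 2 + w * y ^ 3) =
          (α₁ * x + β₁ * y) ^ 2 * (μ₁ * x + η₁ * y))
    (heq2 : ∀ x y : ℝ,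
      α₂ * (p * x ^ 3 + 3 * q * x ^ 2 * y + 3 * r * x * y ^ 2 + s * y ^ 3) +
        β₂ * (t * x ^ 3 + 3 * u * x ^ 2 * y + 3 * v * x * y ^ 2 + w * y ^ 3) =
          (α₂ * x + β₂ * y) ^ 2 * (μ₂ * x + η₂ * y))
    (heq3 : ∀ x y : ℝ,
      α₃ * (p * x ^ 3 + 3 * q * x ^ 2 * y + 3 * r * x * y ^ 2 + s * y ^ 3) +
        β₃ * (t * x ^ 3 + 3 * u * x ^ 2 * y + 3 * v * x * y ^ 2 + w * y ^ 3) =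
          (α₃ * x + β₃ * y) ^ 2 * (μ₃ * x + η₃ * y)) :
    -(r * w) + 2 * r ^ 2 - 2 * q * s + v * s = 0 ∧
    2 * p * s - 4 * u * s - 2 * q * r + 4 * v * r = 0 ∧
    2 * q ^ 2 + 2 * v ^ 2 + 3 * t * s - 2 * p * r + u * r + p * w
      - 2 * u * w - 5 * q * v = 0 ∧
    -(4 * t * r) + 2 * t * w + 4 * u * q - 2 * u * v = 0 ∧
    2 * u ^ 2 + t * q - 2 * t * v - p * u = 0 := by
  have hα1 : α₁ ≠ 0 := left_ne_zero_of_mul h1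
  have hα2 : α₂ ≠ 0 := left_ne_zero_of_mul h2
  have hα3 : α₃ ≠ 0 := left_ne_zero_of_mul h3
  obtain ⟨k1, hk1⟩ : ∃ k : ℝ, k = β₁ / α₁ := ⟨_, rfl⟩
  obtain ⟨k2, hk2⟩ : ∃ k : ℝ, k = β₂ / α₂ := ⟨_, rfl⟩
  obtain ⟨k3, hk3⟩ : ∃ k : ℝ, k = β₃ / α₃ := ⟨_, rfl⟩
  have hkk1 : k1 * α₁ = β₁ := by rw [hk1]; field_simp
  have hkk2 : k2 * α₂ = β₂ := by rw [hk2]; field_simp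
  have hkk3 : k3 * α₃ = β₃ := by rw [hk3]; field_simp
  have hd12 : k1 ≠ k2 := by
    intro h
    apply hind12
    rw [hk1, hk2, div_eq_div_iff hα1 hα2] at h
    linarith
  have hd13 : k1 ≠ k3 := by
    intro h
    apply hind13
    rw [hk1, hk3, div_eq_div_iff hα1 hα3] at h
    linarith
  have hd23 : k2 ≠ k3 := by
    intro h
    apply hind23
    rw [hk2, hk3, div_eq_div_iff hα2 hα3] at h
    linarith
  have hC1_1 : r * α₁ ^ 3 + (v - 2 * q) * α₁ ^ 2 * β₁ + (p - 2 * u) * α₁ * β₁ ^ 2 + t * β₁ ^ 3 = 0 := by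
    linear_combination (β₁ ^ 2 - α₁ ^ 2 / 3) * heq1 1 0 + (2 * α₁ * β₁ / 3) * heq1 0 1 + (α₁ ^ 2 / 6 - α₁ * β₁ / 3) * heq1 1 1 + (α₁ ^ 2 / 6 + α₁ * β₁ / 3) * heq1 1 (-1)
  have hC2_1 : s * α₁ ^ 3 + (w - 2 * r) * α₁ ^ 2 * β₁ + (q - 2 * v) * α₁ * β₁ ^ 2 + u * β₁ ^ 3 = 0 := by
    linear_combination (2 * α₁ * β₁ / 3) * heq1 1 0 + (α₁ ^ 2 - β₁ ^ 2 / 3) * heq1 0 1 + (β₁ ^ 2 / 6 - α₁ * β₁ / 3) * heq1 1 1 + (-β₁ ^ 2 / 6 - α₁ * β₁ / 3) * heq1 1 (-1)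
  have hE1 : r + (v - 2 * q) * k1 + (p - 2 * u) * k1 ^ 2 + t * k1 ^ 3 = 0 := by
    have h : (r + (v - 2 * q) * k1 + (p - 2 * u) * k1 ^ 2 + t * k1 ^ 3) * α₁ ^ 3 = 0 := by
      linear_combination hC1_1 + ((v - 2 * q) * α₁ ^ 2 + (p - 2 * u) * α₁ * (k1 * α₁ + β₁) + t * (k1 ^ 2 * α₁ ^ 2 + k1 * α₁ * β₁ + β₁ ^ 2)) * hkk1
    exact (mul_eq_zero.mp h).resolve_right (pow_ne_zero _ hα1)
  have hF1 : s + (w - 2 * r) * k1 + (q - 2 * v) * k1 ^ 2 + u * k1 ^ 3 = 0 := by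
    have h : (s + (w - 2 * r) * k1 + (q - 2 * v) * k1 ^ 2 + u * k1 ^ 3) * α₁ ^ 3 = 0 := by
      linear_combination hC2_1 + ((w - 2 * r) * α₁ ^ 2 + (q - 2 * v) * α₁ * (k1 * α₁ + β₁) + u * (k1 ^ 2 * α₁ ^ 2 + k1 * α₁ * β₁ + β₁ ^ 2)) * hkk1
    exact (mul_eq_zero.mp h).resolve_right (pow_ne_zero _ hα1)
  have hC1_2 : r * α₂ ^ 3 + (v - 2 * q) * α₂ ^ 2 * β₂ + (p - 2 * u) * α₂ * β₂ ^ 2 + t * β₂ ^ 3 = 0 := by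
    linear_combination (β₂ ^ 2 - α₂ ^ 2 / 3) * heq2 1 0 + (2 * α₂ * β₂ / 3) * heq2 0 1 + (α₂ ^ 2 / 6 - α₂ * β₂ / 3) * heq2 1 1 + (α₂ ^ 2 / 6 + α₂ * β₂ / 3) * heq2 1 (-1)
  have hC2_2 : s * α₂ ^ 3 + (w - 2 * r) * α₂ ^ 2 * β₂ + (q - 2 * v) * α₂ * β₂ ^ 2 + u * β₂ ^ 3 = 0 := by
    linear_combination (2 * α₂ * β₂ / 3) * heq2 1 0 + (α₂ ^ 2 - β₂ ^ 2 / 3) * heq2 0 1 + (β₂ ^ 2 / 6 - α₂ * β₂ / 3) * heq2 1 1 + (-β₂ ^ 2 / 6 - α₂ * β₂ / 3) * heq2 1 (-1)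
  have hE2 : r + (v - 2 * q) * k2 + (p - 2 * u) * k2 ^ 2 + t * k2 ^ 3 = 0 := by
    have h : (r + (v - 2 * q) * k2 + (p - 2 * u) * k2 ^ 2 + t * k2 ^ 3) * α₂ ^ 3 = 0 := by
      linear_combination hC1_2 + ((v - 2 * q) * α₂ ^ 2 + (p - 2 * u) * α₂ * (k2 * α₂ + β₂) + t * (k2 ^ 2 * α₂ ^ 2 + k2 * α₂ * β₂ + β₂ ^ 2)) * hkk2
    exact (mul_eq_zero.mp h).resolve_right (pow_ne_zero _ hα2)
  have hF2 : s + (w - 2 * r) * k2 + (q - 2 * v) * k2 ^ 2 + u * k2 ^ 3 = 0 := by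
    have h : (s + (w - 2 * r) * k2 + (q - 2 * v) * k2 ^ 2 + u * k2 ^ 3) * α₂ ^ 3 = 0 := by
      linear_combination hC2_2 + ((w - 2 * r) * α₂ ^ 2 + (q - 2 * v) * α₂ * (k2 * α₂ + β₂) + u * (k2 ^ 2 * α₂ ^ 2 + k2 * α₂ * β₂ + β₂ ^ 2)) * hkk2
    exact (mul_eq_zero.mp h).resolve_right (pow_ne_zero _ hα2)
  have hC1_3 : r * α₃ ^ 3 + (v - 2 * q) * α₃ ^ 2 * β₃ + (p - 2 * u) * α₃ * β₃ ^ 2 + t * β₃ ^ 3 = 0 := by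
    linear_combination (β₃ ^ 2 - α₃ ^ 2 / 3) * heq3 1 0 + (2 * α₃ * β₃ / 3) * heq3 0 1 + (α₃ ^ 2 / 6 - α₃ * β₃ / 3) * heq3 1 1 + (α₃ ^ 2 / 6 + α₃ * β₃ / 3) * heq3 1 (-1)
  have hC2_3 : s * α₃ ^ 3 + (w - 2 * r) * α₃ ^ 2 * β₃ + (q - 2 * v) * α₃ * β₃ ^ 2 + u * β₃ ^ 3 = 0 := by
    linear_combination (2 * α₃ * β₃ / 3) * heq3 1 0 + (α₃ ^ 2 - β₃ ^ 2 / 3) * heq3 0 1 + (β₃ ^ 2 / 6 - α₃ * β₃ / 3) * heq3 1 1 + (-β₃ ^ 2 / 6 - α₃ * β₃ / 3) * heq3 1 (-1)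
  have hE3 : r + (v - 2 * q) * k3 + (p - 2 * u) * k3 ^ 2 + t * k3 ^ 3 = 0 := by
    have h : (r + (v - 2 * q) * k3 + (p - 2 * u) * k3 ^ 2 + t * k3 ^ 3) * α₃ ^ 3 = 0 := by
      linear_combination hC1_3 + ((v - 2 * q) * α₃ ^ 2 + (p - 2 * u) * α₃ * (k3 * α₃ + β₃) + t * (k3 ^ 2 * α₃ ^ 2 + k3 * α₃ * β₃ + β₃ ^ 2)) * hkk3
    exact (mul_eq_zero.mp h).resolve_right (pow_ne_zero _ hα3)
  have hF3 : s + (w - 2 * r) * k3 + (q - 2 * v) * k3 ^ 2 + u * k3 ^ 3 = 0 := by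
    have h : (s + (w - 2 * r) * k3 + (q - 2 * v) * k3 ^ 2 + u * k3 ^ 3) * α₃ ^ 3 = 0 := by
      linear_combination hC2_3 + ((w - 2 * r) * α₃ ^ 2 + (q - 2 * v) * α₃ * (k3 * α₃ + β₃) + u * (k3 ^ 2 * α₃ ^ 2 + k3 * α₃ * β₃ + β₃ ^ 2)) * hkk3
    exact (mul_eq_zero.mp h).resolve_right (pow_ne_zero _ hα3)
  obtain ⟨ha, hb, hc⟩ := cubic_coeffs r (v - 2 * q) (p - 2 * u) t k1 k2 k3 hd12 hd13 hd23 hE1 hE2 hE3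
  obtain ⟨he, hf, hg⟩ := cubic_coeffs s (w - 2 * r) (q - 2 * v) u k1 k2 k3 hd12 hd13 hd23 hF1 hF2 hF3
  have hp : p = 2 * u - t * (k1 + k2 + k3) := by linear_combination hc
  have hq : q = (u * (k1 + k2 + k3) - 2 * t * (k1 * k2 + k1 * k3 + k2 * k3)) / 3 := by
    linear_combination (-2 * hb - hg) / 3
  have hv : v = (2 * u * (k1 + k2 + k3) - t * (k1 * k2 + k1 * k3 + k2 * k3)) / 3 := by
    linear_combination (-hb - 2 * hg) / 3
  have hw : w = 2 * r + u * (k1 * k2 + k1 * k3 + k2 * k3) := by linear_combination hf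
  subst hp hq hv hw
  subst ha he
  refine ⟨by ring, by ring, by ring, by ring, by ring⟩
end

section
/- The four homogeneous cubic vector fields on ℝ², V₁(x,y) = (x³+3xy², 3x²y+y³), V₂(x,y) = (x³−3x²y+3xy², y³), V₃(x,y) = (4x³−6x²y+3xy², y³), V₄(x,y) = (x³, y³), are pairwise linearly equivalent up to constant time rescaling: for each pair (i,j) there exist an invertible linear map g : ℝ² → ℝ² and a real number λ ≠ 0 such that g(Vᵢ(z)) = λ·Vⱼ(g(z)) for all z ∈ ℝ². -/
/-- The four homogeneous cubic vector fields of STATEMENT 6. -/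
def cubicV : Fin 4 → (ℝ × ℝ) → (ℝ × ℝ) :=
  ![fun z => (z.1 ^ 3 + 3 * z.1 * z.2 ^ 2, 3 * z.1 ^ 2 * z.2 + z.2 ^ 3),
    fun z => (z.1 ^ 3 - 3 * z.1 ^ 2 * z.2 + 3 * z.1 * z.2 ^ 2, z.2 ^ 3),
    fun z => (4 * z.1 ^ 3 - 6 * z.1 ^ 2 * z.2 + 3 * z.1 * z.2 ^ 2, z.2 ^ 3),
    fun z => (z.1 ^ 3, z.2 ^ 3)]

noncomputable def gA : (ℝ × ℝ) ≃ₗ[ℝ] (ℝ × ℝ) where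
  toFun p := (p.1 + p.2, p.1 - p.2)
  invFun p := ((p.1 + p.2) / 2, (p.1 - p.2) / 2)
  map_add' x y := by refine Prod.ext ?_ ?_ <;> simp [smul_eq_mul] <;> ring
  map_smul' c x := by refine Prod.ext ?_ ?_ <;> simp [smul_eq_mul] <;> ring
  left_inv p := by refine Prod.ext ?_ ?_ <;> simp [smul_eq_mul] <;> ring
  right_inv p := by refine Prod.ext ?_ ?_ <;> simp [smul_eq_mul] <;> ring

noncomputable def gB : (ℝ × ℝ) ≃ₗ[ℝ] (ℝ × ℝ) where
  toFun p := (p.1 - p.2, p.2)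
  invFun p := (p.1 + p.2, p.2)
  map_add' x y := by refine Prod.ext ?_ ?_ <;> simp [smul_eq_mul] <;> ring
  map_smul' c x := by refine Prod.ext ?_ ?_ <;> simp [smul_eq_mul] <;> ring
  left_inv p := by refine Prod.ext ?_ ?_ <;> simp [smul_eq_mul] <;> ring
  right_inv p := by refine Prod.ext ?_ ?_ <;> simp [smul_eq_mul] <;> ring

noncomputable def gC : (ℝ × ℝ) ≃ₗ[ℝ] (ℝ × ℝ) where
  toFun p := (-2 * p.1 + p.2, p.2)
  invFun p := ((p.2 - p.1) / 2, p.2)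
  map_add' x y := by refine Prod.ext ?_ ?_ <;> simp [smul_eq_mul] <;> ring
  map_smul' c x := by refine Prod.ext ?_ ?_ <;> simp [smul_eq_mul] <;> ring
  left_inv p := by refine Prod.ext ?_ ?_ <;> simp [smul_eq_mul] <;> ring
  right_inv p := by refine Prod.ext ?_ ?_ <;> simp [smul_eq_mul] <;> ring

lemma hA : ∀ z : ℝ × ℝ, gA (cubicV 0 z) = cubicV 3 (gA z) := by
  intro z
  simp [gA, cubicV, Prod.ext_iff, LinearEquiv.coe_mk]
  constructor <;> ring

lemma hB : ∀ z : ℝ × ℝ, gB (cubicV 1 z) = cubicV 3 (gB z) := by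
  intro z
  simp [gB, cubicV, Prod.ext_iff, LinearEquiv.coe_mk]
  ring

lemma hC : ∀ z : ℝ × ℝ, gC (cubicV 2 z) = cubicV 3 (gC z) := by
  intro z
  simp [gC, cubicV, Prod.ext_iff, LinearEquiv.coe_mk]
  ring

lemma hD : ∀ z : ℝ × ℝ, (LinearEquiv.refl ℝ (ℝ × ℝ)) (cubicV 3 z)
    = cubicV 3 ((LinearEquiv.refl ℝ (ℝ × ℝ)) z) := by
  intro z; simp

lemma comp_key (i j : Fin 4) (a b : (ℝ × ℝ) ≃ₗ[ℝ] (ℝ × ℝ))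
    (ha : ∀ z, a (cubicV i z) = cubicV 3 (a z))
    (hb : ∀ z, b (cubicV j z) = cubicV 3 (b z)) :
    ∃ (g : (ℝ × ℝ) ≃ₗ[ℝ] (ℝ × ℝ)) (lam : ℝ), lam ≠ 0 ∧
      ∀ z : ℝ × ℝ, g (cubicV i z) = lam • cubicV j (g z) := by
  refine ⟨a.trans b.symm, 1, one_ne_zero, fun z => ?_⟩
  have h2 : cubicV j (b.symm (a z)) = b.symm (cubicV 3 (a z)) := by
    have := hb (b.symm (a z))
    rw [b.apply_symm_apply] at this
    exact b.injective (by rw [this, b.apply_symm_apply])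
  simp [LinearEquiv.trans_apply, ha z, h2]

/-- The four homogeneous cubic vector fields
`V₁ = (x³+3xy², 3x²y+y³)`, `V₂ = (x³−3x²y+3xy², y³)`,
`V₃ = (4x³−6x²y+3xy², y³)`, `V₄ = (x³, y³)` are pairwise linearly equivalent
up to constant time rescaling. -/
theorem cubicV_pairwise_linearly_equivalent :
    ∀ i j : Fin 4, ∃ (g : (ℝ × ℝ) ≃ₗ[ℝ] (ℝ × ℝ)) (lam : ℝ), lam ≠ 0 ∧
      ∀ z : ℝ × ℝ, g (cubicV i z) = lam • cubicV j (g z) := by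
  intro i j
  fin_cases i <;> fin_cases j
  · exact comp_key 0 0 gA gA hA hA
  · exact comp_key 0 1 gA gB hA hB
  · exact comp_key 0 2 gA gC hA hC
  · exact comp_key 0 3 gA _ hA hD
  · exact comp_key 1 0 gB gA hB hA
  · exact comp_key 1 1 gB gB hB hB
  · exact comp_key 1 2 gB gC hB hC
  · exact comp_key 1 3 gB _ hB hD
  · exact comp_key 2 0 gC gA hC hA
  · exact comp_key 2 1 gC gB hC hB
  · exact comp_key 2 2 gC gC hC hC
  · exact comp_key 2 3 gC _ hC hD
  · exact comp_key 3 0 _ gA hD hA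
  · exact comp_key 3 1 _ gB hD hB
  · exact comp_key 3 2 _ gC hD hC
  · exact comp_key 3 3 _ _ hD hD
end

section
/- For every f ∈ ℝ, the cubic system ẋ = −2f·x + 2x³, ẏ = −3f·x + f·y + 3xy² − y³ (with P = −2fx+2x³, Q = −3fx+fy+3xy²−y³) satisfies: x divides P, (x²−f) divides P, (y²−f) divides Q, (x−y) divides P−Q, and ((2x−y)²−f) divides 2P−Q in ℝ[x,y]. Consequently the eight straight lines x = 0, x = ±√f, y = ±√f, y = x, 2x−y = ±√f (square roots taken over ℂ when f < 0) are invariant straight lines of the system. -/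
open MvPolynomial

/-- For the system ẋ = −2fx+2x³, ẏ = −3fx+fy+3xy²−y³ one has
`x ∣ P`, `(x²−f) ∣ P`, `(y²−f) ∣ Q`, `(x−y) ∣ P−Q`, `((2x−y)²−f) ∣ 2P−Q`
in `ℝ[x,y]`, so the lines `x = 0`, `x = ±√f`, `y = ±√f`, `y = x`,
`2x−y = ±√f` are invariant straight lines. -/
theorem invariant_lines_of_config3221 (f : ℝ) :
    (X 0 : MvPolynomial (Fin 2) ℝ) ∣ (C (-2 * f) * X 0 + 2 * X 0 ^ 3) ∧
    (X 0 ^ 2 - C f : MvPolynomial (Fin 2) ℝ) ∣ (C (-2 * f) * X 0 + 2 * X 0 ^ 3) ∧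
    (X 1 ^ 2 - C f : MvPolynomial (Fin 2) ℝ) ∣
      (C (-3 * f) * X 0 + C f * X 1 + 3 * X 0 * X 1 ^ 2 - X 1 ^ 3) ∧
    (X 0 - X 1 : MvPolynomial (Fin 2) ℝ) ∣
      ((C (-2 * f) * X 0 + 2 * X 0 ^ 3) -
        (C (-3 * f) * X 0 + C f * X 1 + 3 * X 0 * X 1 ^ 2 - X 1 ^ 3)) ∧
    ((2 * X 0 - X 1) ^ 2 - C f : MvPolynomial (Fin 2) ℝ) ∣
      (2 * (C (-2 * f) * X 0 + 2 * X 0 ^ 3) -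
        (C (-3 * f) * X 0 + C f * X 1 + 3 * X 0 * X 1 ^ 2 - X 1 ^ 3)) := by
  refine ⟨⟨C (-2 * f) + 2 * X 0 ^ 2, by simp only [map_mul, map_neg, map_ofNat]; ring⟩,
    ⟨2 * X 0, by simp only [map_mul, map_neg, map_ofNat]; ring⟩,
    ⟨3 * X 0 - X 1, by simp only [map_mul, map_neg, map_ofNat]; ring⟩,
    ⟨C f + 2 * X 0 ^ 2 + 2 * X 0 * X 1 - X 1 ^ 2, by simp only [map_mul, map_neg, map_ofNat]; ring⟩,
    ⟨X 0 + X 1, by simp only [map_mul, map_neg, map_ofNat]; ring⟩⟩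
end

section
/- For every ε ∈ ℝ, the cubic system ẋ = −x + x³, ẏ = −y + 3x²y − 18εxy² + 36ε²y³ (with P = −x+x³, Q = −y+3x²y−18εxy²+36ε²y³) satisfies: x, x−1 and x+1 divide P; y divides Q; (x−3εy) divides P−3εQ; and (x−6εy), (x−6εy−1), (x−6εy+1) divide P−6εQ in ℝ[x,y]. Consequently the eight straight lines x = 0, x = ±1, y = 0, x−3εy = 0, x−6εy = 0, x−6εy = ±1 are invariant straight lines of the system (and they are pairwise distinct when ε ≠ 0). -/
/-!
Along a solution, `u = x - 6εy` obeys `u̇ = P - 6εQ = u³ - u`, the same equation as `x`; hence the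
lines `u = 0, ±1` are invariant for the same reason as `x = 0, ±1`. Moreover `Q` is a multiple of `y`,
and `P - 3εQ = (x - 3εy)(x² - 6εxy + 36ε²y² - 1)`. The eight lines are told apart by test points.
-/

open MvPolynomial

section CommRing

variable {R : Type*} [CommRing R]

theorem neg_add_pow_three_eq_mul (a : R) : -a + a ^ 3 = a * (a - 1) * (a + 1) := by ring

theorem dvd_neg_add_pow_three (a : R) :
    a ∣ -a + a ^ 3 ∧ a - 1 ∣ -a + a ^ 3 ∧ a + 1 ∣ -a + a ^ 3 := by
  rw [neg_add_pow_three_eq_mul]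
  exact ⟨(dvd_mul_right _ _).mul_right _, (dvd_mul_left _ _).mul_right _, dvd_mul_left _ _⟩

theorem neg_add_pow_three_sub_six_mul (e x y : R) :
    (-x + x ^ 3) - 6 * e * (-y + 3 * x ^ 2 * y - 18 * e * x * y ^ 2 + 36 * e ^ 2 * y ^ 3) =
      -(x - 6 * e * y) + (x - 6 * e * y) ^ 3 := by
  ring

theorem neg_add_pow_three_sub_three_mul (e x y : R) :
    (-x + x ^ 3) - 3 * e * (-y + 3 * x ^ 2 * y - 18 * e * x * y ^ 2 + 36 * e ^ 2 * y ^ 3) =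
      (x - 3 * e * y) * (-1 + x ^ 2 - 6 * e * x * y + 36 * e ^ 2 * y ^ 2) := by
  ring

end CommRing

section Lines

def slantLine (a c : ℝ) : Set (ℝ × ℝ) := {z | z.1 - a * z.2 = c}

theorem slantLine_eq_slantLine_iff {a c a' c' : ℝ} :
    slantLine a c = slantLine a' c' ↔ a = a' ∧ c = c' := by
  refine ⟨fun h => ?_, fun ⟨ha, hc⟩ => ha ▸ hc ▸ rfl⟩
  have h₀ : ((c, 0) : ℝ × ℝ) ∈ slantLine a' c' := h ▸ by simp [slantLine]
  have h₁ : ((c + a, 1) : ℝ × ℝ) ∈ slantLine a' c' := h ▸ by simp [slantLine]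
  simp only [slantLine, Set.mem_ofPred_eq] at h₀ h₁
  constructor <;> linarith

theorem slantLine_ne_xAxis (a c : ℝ) : slantLine a c ≠ {z | z.2 = 0} := by
  intro h
  have : ((c + 1, 0) : ℝ × ℝ) ∈ slantLine a c := h ▸ rfl
  simp [slantLine] at this

theorem invariantLines_injective {ε : ℝ} (hε : ε ≠ 0) :
    Function.Injective
      (![{z : ℝ × ℝ | z.1 = 0}, {z | z.1 = 1}, {z | z.1 = -1},
         {z | z.2 = 0}, {z | z.1 - 3 * ε * z.2 = 0},
         {z | z.1 - 6 * ε * z.2 = 0}, {z | z.1 - 6 * ε * z.2 = 1},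
         {z | z.1 - 6 * ε * z.2 = -1}] : Fin 8 → Set (ℝ × ℝ)) := by
  have hvertical (c : ℝ) : {z : ℝ × ℝ | z.1 = c} = slantLine 0 c := by simp [slantLine]
  simp only [hvertical]
  change Function.Injective ![slantLine 0 0, slantLine 0 1, slantLine 0 (-1), {z | z.2 = 0},
    slantLine (3 * ε) 0, slantLine (6 * ε) 0, slantLine (6 * ε) 1, slantLine (6 * ε) (-1)]
  simp only [Matrix.vecCons, Fin.cons_injective_iff]
  norm_num [Matrix.range_empty, Function.injective_of_subsingleton, slantLine_eq_slantLine_iff,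
    slantLine_ne_xAxis, Ne.symm (slantLine_ne_xAxis _ _), hε]

end Lines

/-- For the perturbed system `P = −x+x³`,
`Q = −y+3x²y−18εxy²+36ε²y³` one has `x, x−1, x+1 ∣ P`, `y ∣ Q`,
`(x−3εy) ∣ P−3εQ`, and `(x−6εy), (x−6εy−1), (x−6εy+1) ∣ P−6εQ`; hence the
eight lines `x = 0`, `x = ±1`, `y = 0`, `x−3εy = 0`, `x−6εy = 0`,
`x−6εy = ±1` are invariant straight lines, pairwise distinct when `ε ≠ 0`. -/
theorem perturbed_system_fig19 (ε : ℝ) :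
    (X 0 : MvPolynomial (Fin 2) ℝ) ∣ (-X 0 + X 0 ^ 3) ∧
    (X 0 - 1 : MvPolynomial (Fin 2) ℝ) ∣ (-X 0 + X 0 ^ 3) ∧
    (X 0 + 1 : MvPolynomial (Fin 2) ℝ) ∣ (-X 0 + X 0 ^ 3) ∧
    (X 1 : MvPolynomial (Fin 2) ℝ) ∣
      (-X 1 + 3 * X 0 ^ 2 * X 1 - C (18 * ε) * X 0 * X 1 ^ 2 +
        C (36 * ε ^ 2) * X 1 ^ 3) ∧
    (X 0 - C (3 * ε) * X 1 : MvPolynomial (Fin 2) ℝ) ∣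
      ((-X 0 + X 0 ^ 3) - C (3 * ε) *
        (-X 1 + 3 * X 0 ^ 2 * X 1 - C (18 * ε) * X 0 * X 1 ^ 2 +
          C (36 * ε ^ 2) * X 1 ^ 3)) ∧
    (X 0 - C (6 * ε) * X 1 : MvPolynomial (Fin 2) ℝ) ∣
      ((-X 0 + X 0 ^ 3) - C (6 * ε) *
        (-X 1 + 3 * X 0 ^ 2 * X 1 - C (18 * ε) * X 0 * X 1 ^ 2 +
          C (36 * ε ^ 2) * X 1 ^ 3)) ∧
    (X 0 - C (6 * ε) * X 1 - 1 : MvPolynomial (Fin 2) ℝ) ∣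
      ((-X 0 + X 0 ^ 3) - C (6 * ε) *
        (-X 1 + 3 * X 0 ^ 2 * X 1 - C (18 * ε) * X 0 * X 1 ^ 2 +
          C (36 * ε ^ 2) * X 1 ^ 3)) ∧
    (X 0 - C (6 * ε) * X 1 + 1 : MvPolynomial (Fin 2) ℝ) ∣
      ((-X 0 + X 0 ^ 3) - C (6 * ε) *
        (-X 1 + 3 * X 0 ^ 2 * X 1 - C (18 * ε) * X 0 * X 1 ^ 2 +
          C (36 * ε ^ 2) * X 1 ^ 3)) ∧
    (ε ≠ 0 → Function.Injective
      (![{z : ℝ × ℝ | z.1 = 0}, {z | z.1 = 1}, {z | z.1 = -1},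
         {z | z.2 = 0}, {z | z.1 - 3 * ε * z.2 = 0},
         {z | z.1 - 6 * ε * z.2 = 0}, {z | z.1 - 6 * ε * z.2 = 1},
         {z | z.1 - 6 * ε * z.2 = -1}] : Fin 8 → Set (ℝ × ℝ))) := by
  simp only [C_mul, C_pow, map_ofNat]
  rw [neg_add_pow_three_sub_three_mul, neg_add_pow_three_sub_six_mul]
  obtain ⟨hx, hx_sub_one, hx_add_one⟩ := dvd_neg_add_pow_three (X 0 : MvPolynomial (Fin 2) ℝ)
  obtain ⟨hu, hu_sub_one, hu_add_one⟩ :=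
    dvd_neg_add_pow_three (X 0 - 6 * C ε * X 1 : MvPolynomial (Fin 2) ℝ)
  have hy : (X 1 : MvPolynomial (Fin 2) ℝ) ∣
      -X 1 + 3 * X 0 ^ 2 * X 1 - 18 * C ε * X 0 * X 1 ^ 2 + 36 * C ε ^ 2 * X 1 ^ 3 :=
    ⟨-1 + 3 * X 0 ^ 2 - 18 * C ε * X 0 * X 1 + 36 * C ε ^ 2 * X 1 ^ 2, by ring⟩
  exact ⟨hx, hx_sub_one, hx_add_one, hy, dvd_mul_right _ _,
    hu, hu_sub_one, hu_add_one, invariantLines_injective⟩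
end

section
/- Let a,b,c,f ∈ ℝ and consider the cubic system with P = a + cx + x³ and Q = b + fy + y³. Then for w ∈ ℂ: the line x + y + w = 0 is an invariant straight line of the system (i.e. (x+y+w) divides P+Q in ℂ[x,y]) if and only if w = 0, f = c and b = −a; and the line x − y + w = 0 is invariant (i.e. (x−y+w) divides P−Q) if and only if w = 0, f = c and b = a. In particular, the system admits invariant straight lines in both diagonal directions if and only if f = c and a = b = 0, in which case these lines are y = −x and y = x. -/
open MvPolynomial

/-- For the system `P = a+cx+x³`, `Q = b+fy+y³`: the line
`x+y+w = 0` is invariant iff `w = 0 ∧ f = c ∧ b = −a`; the line `x−y+w = 0`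
is invariant iff `w = 0 ∧ f = c ∧ b = a`; in particular, the system has
invariant lines in both diagonal directions iff `f = c ∧ a = 0 ∧ b = 0`. -/
theorem diagonal_invariant_lines_characterization (a b c f : ℝ) :
    (∀ w : ℂ,
      ((X 0 + X 1 + C w : MvPolynomial (Fin 2) ℂ) ∣
        (map (algebraMap ℝ ℂ) (C a + C c * X 0 + X 0 ^ 3) +
          map (algebraMap ℝ ℂ) (C b + C f * X 1 + X 1 ^ 3))) ↔
        (w = 0 ∧ f = c ∧ b = -a)) ∧
    (∀ w : ℂ,
      ((X 0 - X 1 + C w : MvPolynomial (Fin 2) ℂ) ∣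
        (map (algebraMap ℝ ℂ) (C a + C c * X 0 + X 0 ^ 3) -
          map (algebraMap ℝ ℂ) (C b + C f * X 1 + X 1 ^ 3))) ↔
        (w = 0 ∧ f = c ∧ b = a)) ∧
    (((∃ w : ℂ, (X 0 + X 1 + C w : MvPolynomial (Fin 2) ℂ) ∣
        (map (algebraMap ℝ ℂ) (C a + C c * X 0 + X 0 ^ 3) +
          map (algebraMap ℝ ℂ) (C b + C f * X 1 + X 1 ^ 3))) ∧
      (∃ w : ℂ, (X 0 - X 1 + C w : MvPolynomial (Fin 2) ℂ) ∣
        (map (algebraMap ℝ ℂ) (C a + C c * X 0 + X 0 ^ 3) -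
          map (algebraMap ℝ ℂ) (C b + C f * X 1 + X 1 ^ 3)))) ↔
      (f = c ∧ a = 0 ∧ b = 0)) := by
  have hplus : ∀ w : ℂ,
      ((X 0 + X 1 + C w : MvPolynomial (Fin 2) ℂ) ∣
        (map (algebraMap ℝ ℂ) (C a + C c * X 0 + X 0 ^ 3) +
          map (algebraMap ℝ ℂ) (C b + C f * X 1 + X 1 ^ 3))) ↔
        (w = 0 ∧ f = c ∧ b = -a) := by
    intro w
    constructor
    · intro h
      have key : ∀ t : ℂ, (↑a + ↑c*t + t^3) + (↑b + ↑f*(-t-w) + (-t-w)^3) = 0 := by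
        intro t
        obtain ⟨k, hk⟩ := h
        have h2 := congrArg (eval ![t, -t - w]) hk
        simp [eval_map, eval₂_add, eval₂_mul, eval₂_pow] at h2
        linear_combination h2
      have h0 := key 0
      have h1 := key 1
      have hm1 := key (-1)
      have hw : w = 0 := by
        linear_combination (-1/6 : ℂ) * h1 + (-1/6 : ℂ) * hm1 + (1/3 : ℂ) * h0
      subst hw
      refine ⟨rfl, ?_, ?_⟩
      · have : (f : ℂ) = (c : ℂ) := by
          linear_combination (1/2 : ℂ) * hm1 - (1/2 : ℂ) * h1
        exact_mod_cast this
      · have : (b : ℂ) = -(a : ℂ) := by linear_combination h0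
        exact_mod_cast this
    · rintro ⟨rfl, rfl, rfl⟩
      refine ⟨C ((f:ℂ)) + X 0 ^ 2 - X 0 * X 1 + X 1 ^ 2, ?_⟩
      simp only [map_add, map_mul, map_pow, map_C, map_X, Complex.ofReal_neg, map_neg,
        Complex.coe_algebraMap, map_zero]
      ring
  have hminus : ∀ w : ℂ,
      ((X 0 - X 1 + C w : MvPolynomial (Fin 2) ℂ) ∣
        (map (algebraMap ℝ ℂ) (C a + C c * X 0 + X 0 ^ 3) -
          map (algebraMap ℝ ℂ) (C b + C f * X 1 + X 1 ^ 3))) ↔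
        (w = 0 ∧ f = c ∧ b = a) := by
    intro w
    constructor
    · intro h
      have key : ∀ t : ℂ, (↑a + ↑c*t + t^3) - (↑b + ↑f*(t+w) + (t+w)^3) = 0 := by
        intro t
        obtain ⟨k, hk⟩ := h
        have h2 := congrArg (eval ![t, t + w]) hk
        simp [eval_map, eval₂_add, eval₂_mul, eval₂_pow] at h2
        linear_combination h2
      have h0 := key 0
      have h1 := key 1
      have hm1 := key (-1)
      have hw : w = 0 := by
        linear_combination (-1/6 : ℂ) * h1 + (-1/6 : ℂ) * hm1 + (1/3 : ℂ) * h0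
      subst hw
      refine ⟨rfl, ?_, ?_⟩
      · have : (f : ℂ) = (c : ℂ) := by
          linear_combination (1/2 : ℂ) * hm1 - (1/2 : ℂ) * h1
        exact_mod_cast this
      · have : (b : ℂ) = (a : ℂ) := by linear_combination -h0
        exact_mod_cast this
    · rintro ⟨rfl, rfl, rfl⟩
      refine ⟨C ((f:ℂ)) + X 0 ^ 2 + X 0 * X 1 + X 1 ^ 2, ?_⟩
      simp only [map_add, map_mul, map_pow, map_C, map_X, Complex.ofReal_neg, map_neg,
        Complex.coe_algebraMap, map_zero]
      ring
  refine ⟨hplus, hminus, ?_⟩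
  constructor
  · rintro ⟨⟨w1, hd1⟩, ⟨w2, hd2⟩⟩
    obtain ⟨-, hfc, hba⟩ := (hplus w1).mp hd1
    obtain ⟨-, -, hba'⟩ := (hminus w2).mp hd2
    refine ⟨hfc, by linarith, by linarith⟩
  · rintro ⟨hfc, ha, hb⟩
    exact ⟨⟨0, (hplus 0).mpr ⟨rfl, hfc, by rw [ha, hb]; ring⟩⟩,
           ⟨0, (hminus 0).mpr ⟨rfl, hfc, by rw [ha, hb]⟩⟩⟩
end
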